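/- (Condition (C8) for G^κ.) Let Θ be a nonempty measurable set of Lévy triplets with 𝒦 := sup_{(b,c,F)∈Θ} { ∫_{ℝ^d} |z|∧|z|² F(dz) + |b| + |c| } < ∞, and let G^κ, κ ∈ (0,1), be the associated approximating nonlinearities. Then there exists a constant C > 0 (depending only on 𝒦) such that |G^κ(p_1, q_1, f(t,·)+ψ(·), g(t,·)+ψ(·)) − G^κ(p_2, q_2, f(t,·), g(t,·))| ≤ C ( |p_1 − p_2| + |q_1 − q_2| + ‖D_x ψ‖_∞ + ‖D²_{xx} ψ‖_∞ ) for all κ ∈ (0,1), t ∈ (0,∞), p_1, p_2 ∈ ℝ^d, q_1, q_2 ∈ S^d, all bounded upper or lower semicontinuous f on (0,∞)×ℝ^d, all g ∈ C^{1,2}((0,∞)×ℝ^d) and all ψ ∈ C²_b(ℝ^d). -/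

import Mathlib

open MeasureTheory Filter Set
open scoped NNReal ENNReal Topology

noncomputable section

/-- Euclidean space `ℝ^d`. -/
abbrev Eu (d : ℕ) : Type := EuclideanSpace ℝ (Fin d)

/-- Matrices carry the product (= Borel) σ-algebra. -/
instance matrixMeasurableSpace {d : ℕ} : MeasurableSpace (Matrix (Fin d) (Fin d) ℝ) :=
  inferInstanceAs (MeasurableSpace (Fin d → Fin d → ℝ))

/-- The truncation function `h(z) = z 1_{|z| ≤ 1}`. -/
def trunc {d : ℕ} (z : Eu d) : Eu d := if ‖z‖ ≤ 1 then z else 0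

/-- `F` is a Lévy measure on `ℝ^d`: `F({0}) = 0` and `∫ |z|² ∧ 1 F(dz) < ∞`. -/
def IsLevyMeasure {d : ℕ} (F : Measure (Eu d)) : Prop :=
  F {0} = 0 ∧ (∫⁻ z, ENNReal.ofReal (min (‖z‖ ^ 2) 1) ∂F) < ⊤

/-- `Θ` is a set of Lévy triplets `(b, c, F)`: `c` is symmetric nonnegative definite and
`F` is a Lévy measure. -/
def IsLevyTripletSet {d : ℕ}
    (Θ : Set (Eu d × Matrix (Fin d) (Fin d) ℝ × Measure (Eu d))) : Prop :=
  ∀ x ∈ Θ, x.2.1.PosSemidef ∧ IsLevyMeasure x.2.2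

/-- The condition `𝒦 = sup_{(b,c,F) ∈ Θ} { ∫ |z| ∧ |z|² F(dz) + |b| + |c| } < ∞`. -/
def HasUniformBound {d : ℕ}
    (Θ : Set (Eu d × Matrix (Fin d) (Fin d) ℝ × Measure (Eu d))) : Prop :=
  ∃ K : ℝ≥0, ∀ x ∈ Θ,
    (∫⁻ z, ENNReal.ofReal (min ‖z‖ (‖z‖ ^ 2)) ∂x.2.2)
      + ENNReal.ofReal ‖x.1‖ + ∑ i, ∑ j, ENNReal.ofReal |x.2.1 i j| ≤ K

/-- The condition `𝒦_ε := sup_{F ∈ Θ₃} ∫_{|z| ≤ ε} |z|² F(dz) → 0` as `ε ↓ 0`. -/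
def HasVanishingSmallJumps {d : ℕ}
    (Θ : Set (Eu d × Matrix (Fin d) (Fin d) ℝ × Measure (Eu d))) : Prop :=
  Tendsto (fun ε : ℝ => ⨆ x ∈ Θ, ∫⁻ z in {z : Eu d | ‖z‖ ≤ ε},
      ((‖z‖₊ : ℝ≥0∞) ^ 2) ∂x.2.2)
    (nhdsWithin 0 (Set.Ioi 0)) (nhds 0)

/-- The nonlinearity
`G(p,q,f) = sup_{(b,c,F) ∈ Θ} { p·b + ½ tr[q c] + ∫ [f(z) - f(0) - D f(0)·h(z)] F(dz) }`. -/
def Gop {d : ℕ} (Θ : Set (Eu d × Matrix (Fin d) (Fin d) ℝ × Measure (Eu d)))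
    (p : Eu d) (q : Matrix (Fin d) (Fin d) ℝ) (f : Eu d → ℝ) : ℝ :=
  sSup {r : ℝ | ∃ x ∈ Θ,
    r = (∑ i, p i * x.1 i) + (1 / 2) * (q * x.2.1).trace
      + ∫ z, (f z - f 0 - fderiv ℝ f 0 (trunc z)) ∂x.2.2}

/-- The approximating nonlinearity `G^κ(p,q,f,g)`, where jumps of size `≤ κ` are handled
with the test function `g` and jumps of size `> κ` with `f`. -/
def Gkop {d : ℕ} (Θ : Set (Eu d × Matrix (Fin d) (Fin d) ℝ × Measure (Eu d)))
    (κ : ℝ) (p : Eu d) (q : Matrix (Fin d) (Fin d) ℝ) (f g : Eu d → ℝ) : ℝ :=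
  sSup {r : ℝ | ∃ x ∈ Θ,
    r = (∑ i, p i * x.1 i) + (1 / 2) * (q * x.2.1).trace
      + (∫ z in {z : Eu d | κ < ‖z‖}, (f z - f 0 - fderiv ℝ g 0 (trunc z)) ∂x.2.2)
      + (∫ z in {z : Eu d | ‖z‖ ≤ κ}, (g z - g 0 - fderiv ℝ g 0 (trunc z)) ∂x.2.2)}

/-- `f ∈ C^{1,2}((0,∞) × ℝ^d)`: jointly continuous, continuously differentiable in `t`
and twice continuously differentiable in `x` on `(0,∞) × ℝ^d`. -/
def IsC12 {d : ℕ} (f : ℝ → Eu d → ℝ) : Prop :=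
  ContinuousOn (fun pt : ℝ × Eu d => f pt.1 pt.2) (Set.Ioi 0 ×ˢ Set.univ) ∧
  (∀ x, ContDiffOn ℝ 1 (fun t => f t x) (Set.Ioi 0)) ∧
  (∀ t ∈ Set.Ioi (0 : ℝ), ContDiff ℝ 2 (f t)) ∧
  ContinuousOn (fun pt : ℝ × Eu d => fderiv ℝ (f pt.1) pt.2) (Set.Ioi 0 ×ˢ Set.univ) ∧
  ContinuousOn (fun pt : ℝ × Eu d => fderiv ℝ (fderiv ℝ (f pt.1)) pt.2)
    (Set.Ioi 0 ×ˢ Set.univ)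

/-- `f ∈ C_b^{1,2}((0,∞) × ℝ^d)`: `f ∈ C^{1,2}` with `f` and its derivatives bounded. -/
def IsC12b {d : ℕ} (f : ℝ → Eu d → ℝ) : Prop :=
  IsC12 f ∧
  ∃ C : ℝ, ∀ t ∈ Set.Ioi (0 : ℝ), ∀ x,
    |f t x| ≤ C ∧ |deriv (fun s => f s x) t| ≤ C ∧
    ‖fderiv ℝ (f t) x‖ ≤ C ∧ ‖fderiv ℝ (fderiv ℝ (f t)) x‖ ≤ C

/-- `f` is a bounded semicontinuous (upper or lower) function on `(0,∞) × ℝ^d`. -/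
def IsBoundedSC {d : ℕ} (f : ℝ → Eu d → ℝ) : Prop :=
  (UpperSemicontinuousOn (fun pt : ℝ × Eu d => f pt.1 pt.2) (Set.Ioi 0 ×ˢ Set.univ) ∨
    LowerSemicontinuousOn (fun pt : ℝ × Eu d => f pt.1 pt.2) (Set.Ioi 0 ×ˢ Set.univ)) ∧
  ∃ C : ℝ, ∀ t ∈ Set.Ioi (0 : ℝ), ∀ x, |f t x| ≤ C

/-- `ψ ∈ C²_b(ℝ^d)`: twice continuously differentiable with `ψ` and its first two
derivatives bounded. -/
def IsC2b {d : ℕ} (ψ : Eu d → ℝ) : Prop :=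
  ContDiff ℝ 2 ψ ∧ ∃ C : ℝ, ∀ y, |ψ y| ≤ C ∧ ‖fderiv ℝ ψ y‖ ≤ C ∧
    ‖fderiv ℝ (fderiv ℝ ψ) y‖ ≤ C

/-!
For a fixed triplet `(b, c, F)`, replacing `(p₂, q₂, f, g)` by `(p₁, q₁, f + ψ, g + ψ)` changes
the quantity under the supremum by `(p₁ - p₂)·b + ½ tr[(q₁ - q₂) c]` plus the full Lévy
integral `∫ [ψ(z) - ψ(0) - Dψ(0)·h(z)] F(dz)`, because the small- and large-jump regions
partition `ℝ^d`. Taylor's formula bounds that integrand by `(‖Dψ‖_∞ + ‖D²ψ‖_∞) (|z| ∧ |z|²)`,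
so the change is at most `𝒦 (|p₁ - p₂| + |q₁ - q₂| + ‖Dψ‖_∞ + ‖D²ψ‖_∞)` uniformly over `Θ`,
and suprema of two families that are uniformly close are equally close.
-/

-- `sSup` of an unbounded set of reals is `0`; the two images are unbounded simultaneously.
lemma abs_sSup_image_sub_sSup_image_le {ι : Type*} {s : Set ι} {u v : ι → ℝ} {M : ℝ}
    (hM : 0 ≤ M) (h : ∀ x ∈ s, |u x - v x| ≤ M) :
    |sSup (u '' s) - sSup (v '' s)| ≤ M := by
  rcases s.eq_empty_or_nonempty with rfl | hs
  · simpa using hM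
  have transfer : ∀ {u v : ι → ℝ}, (∀ x ∈ s, |u x - v x| ≤ M) →
      BddAbove (v '' s) → BddAbove (u '' s) := by
    rintro u v h ⟨B, hB⟩
    refine ⟨B + M, ?_⟩
    rintro _ ⟨x, hx, rfl⟩
    linarith [(abs_le.1 (h x hx)).2, hB ⟨x, hx, rfl⟩]
  have h' : ∀ x ∈ s, |v x - u x| ≤ M := fun x hx => abs_sub_comm (u x) (v x) ▸ h x hx
  by_cases hv : BddAbove (v '' s)
  · have hu := transfer h hv
    rw [abs_sub_le_iff, sub_le_iff_le_add, sub_le_iff_le_add]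
    constructor
    · refine csSup_le (hs.image u) ?_
      rintro _ ⟨x, hx, rfl⟩
      linarith [(abs_le.1 (h x hx)).2, le_csSup hv ⟨x, hx, rfl⟩]
    · refine csSup_le (hs.image v) ?_
      rintro _ ⟨x, hx, rfl⟩
      linarith [(abs_le.1 (h' x hx)).2, le_csSup hu ⟨x, hx, rfl⟩]
  · have hu : ¬BddAbove (u '' s) := fun hu => hv (transfer h' hu)
    simpa [Real.sSup_of_not_bddAbove hu, Real.sSup_of_not_bddAbove hv] using hM

section MeanValue

variable {E : Type*} [NormedAddCommGroup E] [NormedSpace ℝ E]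

lemma abs_sub_sub_fderiv_le_of_norm_fderiv_fderiv_le {ψ : E → ℝ} (hψ : ContDiff ℝ 2 ψ)
    {r C : ℝ} (hC : ∀ y ∈ Metric.closedBall (0 : E) r, ‖fderiv ℝ (fderiv ℝ ψ) y‖ ≤ C)
    {z : E} (hz : ‖z‖ ≤ r) :
    |ψ z - ψ 0 - fderiv ℝ ψ 0 z| ≤ C * ‖z‖ ^ 2 := by
  have hball : Metric.closedBall (0 : E) ‖z‖ ⊆ Metric.closedBall 0 r :=
    Metric.closedBall_subset_closedBall hz
  have hC0 : 0 ≤ C :=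
    (norm_nonneg (fderiv ℝ (fderiv ℝ ψ) 0)).trans (hC 0 (Metric.mem_closedBall_self ((norm_nonneg z).trans hz)))
  have h0 : (0 : E) ∈ Metric.closedBall 0 ‖z‖ := Metric.mem_closedBall_self (norm_nonneg z)
  have hzmem : z ∈ Metric.closedBall (0 : E) ‖z‖ := by simp
  have hDψ : ∀ y ∈ Metric.closedBall (0 : E) ‖z‖,
      ‖fderiv ℝ ψ y - fderiv ℝ ψ 0‖ ≤ C * ‖z‖ := by
    intro y hy
    calc ‖fderiv ℝ ψ y - fderiv ℝ ψ 0‖ ≤ C * ‖y - 0‖ :=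
          (convex_closedBall _ _).norm_image_sub_le_of_norm_fderiv_le
            (fun x _ => (hψ.fderiv_right le_rfl).differentiable one_ne_zero x)
            (fun x hx => hC x (hball hx)) h0 hy
      _ ≤ C * ‖z‖ := by gcongr; simpa using hy
  have := (convex_closedBall (0 : E) ‖z‖).norm_image_sub_le_of_norm_fderiv_le'
    (fun x _ => hψ.differentiable two_ne_zero x) hDψ h0 hzmem
  simpa [Real.norm_eq_abs, sq, mul_assoc] using this

lemma abs_sub_le_mul_norm_of_norm_fderiv_le {ψ : E → ℝ} (hψ : Differentiable ℝ ψ) {C : ℝ}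
    (hC : ∀ y, ‖fderiv ℝ ψ y‖ ≤ C) (z : E) : |ψ z - ψ 0| ≤ C * ‖z‖ := by
  simpa [Real.norm_eq_abs] using
    convex_univ.norm_image_sub_le_of_norm_fderiv_le (fun y _ => hψ y) (fun y _ => hC y)
      (Set.mem_univ 0) (Set.mem_univ z)

end MeanValue

section Truncation

variable {d : ℕ}

lemma measurable_trunc : Measurable (trunc (d := d)) :=
  Measurable.ite (measurableSet_le measurable_norm measurable_const) measurable_id
    measurable_const

lemma norm_trunc_le (z : Eu d) : ‖trunc z‖ ≤ 1 := by
  unfold trunc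
  split_ifs with h
  · exact h
  · simp

lemma trunc_of_norm_le {z : Eu d} (h : ‖z‖ ≤ 1) : trunc z = z := if_pos h

lemma trunc_of_one_lt {z : Eu d} (h : 1 < ‖z‖) : trunc z = 0 := if_neg h.not_ge

lemma abs_sub_sub_trunc_le {f : Eu d → ℝ} {M : ℝ} (hf : ∀ z, |f z| ≤ M)
    (L : Eu d →L[ℝ] ℝ) (z : Eu d) : |f z - f 0 - L (trunc z)| ≤ 2 * M + ‖L‖ := by
  have hL : |L (trunc z)| ≤ ‖L‖ :=
    (L.le_opNorm _).trans (mul_le_of_le_one_right (norm_nonneg L) (norm_trunc_le z))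
  obtain ⟨hz₁, hz₂⟩ := abs_le.1 (hf z)
  obtain ⟨h0₁, h0₂⟩ := abs_le.1 (hf 0)
  obtain ⟨hL₁, hL₂⟩ := abs_le.1 hL
  exact abs_le.2 ⟨by linarith, by linarith⟩

lemma min_norm_sq_of_norm_le_one {z : Eu d} (h : ‖z‖ ≤ 1) :
    min ‖z‖ (‖z‖ ^ 2) = ‖z‖ ^ 2 :=
  min_eq_right (by nlinarith [norm_nonneg z])

lemma min_norm_sq_of_one_le_norm {z : Eu d} (h : 1 ≤ ‖z‖) :
    min ‖z‖ (‖z‖ ^ 2) = ‖z‖ :=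
  min_eq_left (by nlinarith)

lemma abs_sub_sub_fderiv_trunc_le {ψ : Eu d → ℝ} (hψ : ContDiff ℝ 2 ψ) {C₁ C₂ : ℝ}
    (h₁ : ∀ y, ‖fderiv ℝ ψ y‖ ≤ C₁) (h₂ : ∀ y, ‖fderiv ℝ (fderiv ℝ ψ) y‖ ≤ C₂) (z : Eu d) :
    |ψ z - ψ 0 - fderiv ℝ ψ 0 (trunc z)| ≤ (C₁ + C₂) * min ‖z‖ (‖z‖ ^ 2) := by
  have hC₁ : 0 ≤ C₁ := (norm_nonneg _).trans (h₁ 0)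
  have hC₂ : 0 ≤ C₂ := (norm_nonneg (fderiv ℝ (fderiv ℝ ψ) 0)).trans (h₂ 0)
  rcases le_or_gt ‖z‖ 1 with h | h
  · rw [trunc_of_norm_le h, min_norm_sq_of_norm_le_one h]
    have := abs_sub_sub_fderiv_le_of_norm_fderiv_fderiv_le hψ (fun y _ => h₂ y) h
    nlinarith [sq_nonneg ‖z‖]
  · rw [trunc_of_one_lt h, min_norm_sq_of_one_le_norm h.le, map_zero, sub_zero]
    have := abs_sub_le_mul_norm_of_norm_fderiv_le (hψ.differentiable two_ne_zero) h₁ z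
    nlinarith [norm_nonneg z]

lemma exists_abs_sub_sub_fderiv_trunc_le_of_contDiff {g : Eu d → ℝ} (hg : ContDiff ℝ 2 g) :
    ∃ M, 0 ≤ M ∧ ∀ z : Eu d, ‖z‖ ≤ 1 →
      |g z - g 0 - fderiv ℝ g 0 (trunc z)| ≤ M * min ‖z‖ (‖z‖ ^ 2) := by
  obtain ⟨M, hM⟩ := (isCompact_closedBall (0 : Eu d) 1).exists_bound_of_continuousOn
    ((hg.fderiv_right (m := 1) le_rfl).continuous_fderiv one_ne_zero).continuousOn
  refine ⟨max M 0, le_max_right _ _, fun z hz => ?_⟩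
  rw [trunc_of_norm_le hz, min_norm_sq_of_norm_le_one hz]
  exact abs_sub_sub_fderiv_le_of_norm_fderiv_fderiv_le hg
    (fun y hy => (hM y hy).trans (le_max_left _ _)) hz

end Truncation

section LevyIntegrals

variable {d : ℕ} {F : Measure (Eu d)}

lemma integrable_min_norm_sq (hF : ∫⁻ z, ENNReal.ofReal (min ‖z‖ (‖z‖ ^ 2)) ∂F ≠ ∞) :
    Integrable (fun z => min ‖z‖ (‖z‖ ^ 2)) F :=
  (lintegral_ofReal_ne_top_iff_integrable
    (measurable_norm.min (measurable_norm.pow_const 2)).aestronglyMeasurable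
    (Eventually.of_forall fun z => le_min (norm_nonneg z) (by positivity))).1 hF

lemma integral_min_norm_sq_le {K : ℝ} (hK : 0 ≤ K)
    (hF : ∫⁻ z, ENNReal.ofReal (min ‖z‖ (‖z‖ ^ 2)) ∂F ≤ ENNReal.ofReal K) :
    ∫ z, min ‖z‖ (‖z‖ ^ 2) ∂F ≤ K := by
  rw [integral_eq_lintegral_of_nonneg_ae
    (Eventually.of_forall fun z => le_min (norm_nonneg z) (by positivity))
    (measurable_norm.min (measurable_norm.pow_const 2)).aestronglyMeasurable]
  exact ENNReal.toReal_le_of_le_ofReal hK hF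

lemma integrable_of_abs_le_mul_min_norm_sq
    (hF : ∫⁻ z, ENNReal.ofReal (min ‖z‖ (‖z‖ ^ 2)) ∂F ≠ ∞) {u : Eu d → ℝ} {M : ℝ}
    (hu : AEStronglyMeasurable u F) (hb : ∀ᵐ z ∂F, |u z| ≤ M * min ‖z‖ (‖z‖ ^ 2)) :
    Integrable u F :=
  ((integrable_min_norm_sq hF).const_mul M).mono' hu hb

lemma abs_integral_le_of_abs_le_mul_min_norm_sq {K M : ℝ} (hK : 0 ≤ K) (hM : 0 ≤ M)
    (hF : ∫⁻ z, ENNReal.ofReal (min ‖z‖ (‖z‖ ^ 2)) ∂F ≤ ENNReal.ofReal K) {u : Eu d → ℝ}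
    (hb : ∀ z, |u z| ≤ M * min ‖z‖ (‖z‖ ^ 2)) :
    |∫ z, u z ∂F| ≤ M * K :=
  calc |∫ z, u z ∂F| ≤ ∫ z, M * min ‖z‖ (‖z‖ ^ 2) ∂F :=
        (Real.norm_eq_abs _).symm.trans_le <| norm_integral_le_of_norm_le
          ((integrable_min_norm_sq (ne_top_of_le_ne_top ENNReal.ofReal_ne_top hF)).const_mul M)
          (Eventually.of_forall hb)
    _ ≤ M * K := by
        rw [integral_const_mul]
        exact mul_le_mul_of_nonneg_left (integral_min_norm_sq_le hK hF) hM

lemma measure_norm_gt_ne_top (hF : ∫⁻ z, ENNReal.ofReal (min ‖z‖ (‖z‖ ^ 2)) ∂F ≠ ∞)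
    {κ : ℝ} (hκ : 0 < κ) : F {z | κ < ‖z‖} ≠ ∞ := by
  have hε : ENNReal.ofReal (min κ (κ ^ 2)) ≠ 0 := by
    simp only [ne_eq, ENNReal.ofReal_eq_zero, not_le]
    positivity
  refine ne_top_of_le_ne_top (ENNReal.div_ne_top hF hε) ((measure_mono ?_).trans
    (meas_ge_le_lintegral_div (by fun_prop) hε ENNReal.ofReal_ne_top))
  intro z hz
  simp only [mem_ofPred_eq] at hz ⊢
  gcongr

end LevyIntegrals

section Objective

variable {d : ℕ}

lemma IsBoundedSC.measurable_slice {f : ℝ → Eu d → ℝ} (hf : IsBoundedSC f) {t : ℝ}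
    (ht : t ∈ Ioi (0 : ℝ)) : Measurable (f t) := by
  have hslice : ∀ z : Eu d, Tendsto (fun z' : Eu d => (t, z')) (𝓝 z)
      (𝓝[Ioi (0 : ℝ) ×ˢ univ] (t, z)) := fun z =>
    tendsto_nhdsWithin_of_tendsto_nhds_of_eventually_within _
      ((Continuous.prodMk_right t).tendsto z) (Eventually.of_forall fun _ => ⟨ht, mem_univ _⟩)
  rcases hf.1 with h | h
  · exact UpperSemicontinuous.measurable fun z y hy =>
      (hslice z).eventually (h (t, z) ⟨ht, mem_univ z⟩ y hy)
  · exact LowerSemicontinuous.measurable fun z y hy =>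
      (hslice z).eventually (h (t, z) ⟨ht, mem_univ z⟩ y hy)

lemma abs_sum_mul_le_norm_mul_norm (p b : Eu d) : |∑ i, p i * b i| ≤ ‖p‖ * ‖b‖ := by
  have : ∑ i, p i * b i = inner ℝ p b := by
    simp [PiLp.inner_apply, RCLike.inner_apply, mul_comm]
  rw [this]
  exact abs_real_inner_le_norm p b

lemma abs_trace_mul_le (q c : Matrix (Fin d) (Fin d) ℝ) {K : ℝ} (hc : ∀ i j, |c i j| ≤ K) :
    |(q * c).trace| ≤ (∑ i, ∑ j, |q i j|) * K := by
  have : (q * c).trace = ∑ i, ∑ j, q i j * c j i := by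
    simp [Matrix.trace, Matrix.mul_apply]
  rw [this, Finset.sum_mul]
  refine (Finset.abs_sum_le_sum_abs _ _).trans (Finset.sum_le_sum fun i _ => ?_)
  rw [Finset.sum_mul]
  refine (Finset.abs_sum_le_sum_abs _ _).trans (Finset.sum_le_sum fun j _ => ?_)
  rw [abs_mul]
  exact mul_le_mul_of_nonneg_left (hc j i) (abs_nonneg _)

def gkObjective (κ : ℝ) (p : Eu d) (q : Matrix (Fin d) (Fin d) ℝ) (f g : Eu d → ℝ)
    (x : Eu d × Matrix (Fin d) (Fin d) ℝ × Measure (Eu d)) : ℝ :=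
  (∑ i, p i * x.1 i) + (1 / 2) * (q * x.2.1).trace
    + (∫ z in {z : Eu d | κ < ‖z‖}, (f z - f 0 - fderiv ℝ g 0 (trunc z)) ∂x.2.2)
    + (∫ z in {z : Eu d | ‖z‖ ≤ κ}, (g z - g 0 - fderiv ℝ g 0 (trunc z)) ∂x.2.2)

lemma Gkop_eq_sSup_image (Θ : Set (Eu d × Matrix (Fin d) (Fin d) ℝ × Measure (Eu d)))
    (κ : ℝ) (p : Eu d) (q : Matrix (Fin d) (Fin d) ℝ) (f g : Eu d → ℝ) :
    Gkop Θ κ p q f g = sSup (gkObjective κ p q f g '' Θ) := by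
  simp only [Gkop, gkObjective, Set.image, eq_comm]

end Objective

section Estimate

variable {d : ℕ} {F : Measure (Eu d)}

lemma integrableOn_norm_gt_of_bounded
    (hF : ∫⁻ z, ENNReal.ofReal (min ‖z‖ (‖z‖ ^ 2)) ∂F ≠ ∞) {κ : ℝ} (hκ : 0 < κ)
    {f : Eu d → ℝ} (hfm : Measurable f) {M : ℝ} (hf : ∀ z, |f z| ≤ M) (L : Eu d →L[ℝ] ℝ) :
    IntegrableOn (fun z => f z - f 0 - L (trunc z)) {z | κ < ‖z‖} F :=
  Measure.integrableOn_of_bounded (measure_norm_gt_ne_top hF hκ)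
    ((hfm.sub measurable_const).sub (L.measurable.comp measurable_trunc)).aestronglyMeasurable
    (Eventually.of_forall fun z => (abs_sub_sub_trunc_le hf L z :))

lemma integrableOn_norm_le_of_contDiff
    (hF : ∫⁻ z, ENNReal.ofReal (min ‖z‖ (‖z‖ ^ 2)) ∂F ≠ ∞) {κ : ℝ} (hκ : κ ≤ 1)
    {g : Eu d → ℝ} (hg : ContDiff ℝ 2 g) :
    IntegrableOn (fun z => g z - g 0 - fderiv ℝ g 0 (trunc z)) {z | ‖z‖ ≤ κ} F := by
  obtain ⟨M, -, hM⟩ := exists_abs_sub_sub_fderiv_trunc_le_of_contDiff hg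
  have hs : MeasurableSet {z : Eu d | ‖z‖ ≤ κ} :=
    measurableSet_le measurable_norm measurable_const
  refine integrable_of_abs_le_mul_min_norm_sq
    (ne_top_of_le_ne_top hF (setLIntegral_le_lintegral _ _))
    (((hg.continuous.measurable.sub measurable_const).sub
      ((fderiv ℝ g 0).measurable.comp measurable_trunc)).aestronglyMeasurable)
    ((ae_restrict_iff' hs).2 (Eventually.of_forall fun z hz => hM z (hz.trans hκ)))

lemma gkObjective_add_sub_gkObjective {κ : ℝ} {p₁ p₂ : Eu d}
    {q₁ q₂ : Matrix (Fin d) (Fin d) ℝ} {f g ψ : Eu d → ℝ}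
    {x : Eu d × Matrix (Fin d) (Fin d) ℝ × Measure (Eu d)}
    (hfi : IntegrableOn (fun z => f z - f 0 - fderiv ℝ g 0 (trunc z)) {z | κ < ‖z‖} x.2.2)
    (hgi : IntegrableOn (fun z => g z - g 0 - fderiv ℝ g 0 (trunc z)) {z | ‖z‖ ≤ κ} x.2.2)
    (hψi : Integrable (fun z => ψ z - ψ 0 - fderiv ℝ ψ 0 (trunc z)) x.2.2)
    (hg : DifferentiableAt ℝ g 0) (hψ : DifferentiableAt ℝ ψ 0) :
    gkObjective κ p₁ q₁ (fun z => f z + ψ z) (fun z => g z + ψ z) x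
        - gkObjective κ p₂ q₂ f g x
      = (∑ i, (p₁ - p₂) i * x.1 i) + (1 / 2) * ((q₁ - q₂) * x.2.1).trace
        + ∫ z, (ψ z - ψ 0 - fderiv ℝ ψ 0 (trunc z)) ∂x.2.2 := by
  have hDsum : ∀ z, fderiv ℝ (fun z => g z + ψ z) 0 z = fderiv ℝ g 0 z + fderiv ℝ ψ 0 z :=
    fun z => by rw [fderiv_fun_add hg hψ, add_apply]
  have hlarge : ∫ z in {z : Eu d | κ < ‖z‖},
      (f z + ψ z - (f 0 + ψ 0) - fderiv ℝ (fun z => g z + ψ z) 0 (trunc z)) ∂x.2.2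
      = (∫ z in {z : Eu d | κ < ‖z‖}, (f z - f 0 - fderiv ℝ g 0 (trunc z)) ∂x.2.2)
        + ∫ z in {z : Eu d | κ < ‖z‖}, (ψ z - ψ 0 - fderiv ℝ ψ 0 (trunc z)) ∂x.2.2 := by
    rw [← integral_add hfi hψi.integrableOn]
    congr 1 with z
    rw [hDsum]
    ring
  have hsmall : ∫ z in {z : Eu d | ‖z‖ ≤ κ},
      (g z + ψ z - (g 0 + ψ 0) - fderiv ℝ (fun z => g z + ψ z) 0 (trunc z)) ∂x.2.2
      = (∫ z in {z : Eu d | ‖z‖ ≤ κ}, (g z - g 0 - fderiv ℝ g 0 (trunc z)) ∂x.2.2)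
        + ∫ z in {z : Eu d | ‖z‖ ≤ κ}, (ψ z - ψ 0 - fderiv ℝ ψ 0 (trunc z)) ∂x.2.2 := by
    rw [← integral_add hgi hψi.integrableOn]
    congr 1 with z
    rw [hDsum]
    ring
  have hcompl : {z : Eu d | κ < ‖z‖}ᶜ = {z | ‖z‖ ≤ κ} := by
    ext z
    simp
  rw [← integral_add_compl (measurableSet_lt measurable_const measurable_norm) hψi, hcompl]
  unfold gkObjective
  rw [hlarge, hsmall]
  simp only [PiLp.sub_apply, sub_mul, Finset.sum_sub_distrib, Matrix.trace_sub]
  ring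

lemma abs_gkObjective_add_sub_gkObjective_le {κ : ℝ} (hκ : κ ∈ Ioo (0 : ℝ) 1) {K : ℝ}
    (hK : 0 ≤ K) {x : Eu d × Matrix (Fin d) (Fin d) ℝ × Measure (Eu d)} (hb : ‖x.1‖ ≤ K)
    (hc : ∀ i j, |x.2.1 i j| ≤ K)
    (hF : ∫⁻ z, ENNReal.ofReal (min ‖z‖ (‖z‖ ^ 2)) ∂x.2.2 ≤ ENNReal.ofReal K)
    {f g ψ : Eu d → ℝ} (hfm : Measurable f) {Cf : ℝ} (hf : ∀ z, |f z| ≤ Cf)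
    (hg : ContDiff ℝ 2 g) (hψ : ContDiff ℝ 2 ψ) {C₁ C₂ : ℝ}
    (h₁ : ∀ y, ‖fderiv ℝ ψ y‖ ≤ C₁) (h₂ : ∀ y, ‖fderiv ℝ (fderiv ℝ ψ) y‖ ≤ C₂)
    (p₁ p₂ : Eu d) (q₁ q₂ : Matrix (Fin d) (Fin d) ℝ) :
    |gkObjective κ p₁ q₁ (fun z => f z + ψ z) (fun z => g z + ψ z) x
        - gkObjective κ p₂ q₂ f g x|
      ≤ K * (‖p₁ - p₂‖ + (∑ i, ∑ j, |(q₁ - q₂) i j|) + C₁ + C₂) := by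
  have hFfin := ne_top_of_le_ne_top ENNReal.ofReal_ne_top hF
  have hC₁ : 0 ≤ C₁ := (norm_nonneg _).trans (h₁ 0)
  have hC₂ : 0 ≤ C₂ := (norm_nonneg (fderiv ℝ (fderiv ℝ ψ) 0)).trans (h₂ 0)
  have hψb := abs_sub_sub_fderiv_trunc_le hψ h₁ h₂
  have hψi : Integrable (fun z => ψ z - ψ 0 - fderiv ℝ ψ 0 (trunc z)) x.2.2 :=
    integrable_of_abs_le_mul_min_norm_sq hFfin
      (((hψ.continuous.measurable.sub measurable_const).sub
        ((fderiv ℝ ψ 0).measurable.comp measurable_trunc)).aestronglyMeasurable)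
      (Eventually.of_forall hψb)
  rw [gkObjective_add_sub_gkObjective
    (integrableOn_norm_gt_of_bounded hFfin hκ.1 hfm hf _)
    (integrableOn_norm_le_of_contDiff hFfin hκ.2.le hg) hψi
    (hg.differentiable two_ne_zero 0) (hψ.differentiable two_ne_zero 0)]
  have hp := (abs_sum_mul_le_norm_mul_norm (p₁ - p₂) x.1).trans
    (mul_le_mul_of_nonneg_left hb (norm_nonneg _))
  have hq := abs_trace_mul_le (q₁ - q₂) x.2.1 hc
  have hI := abs_integral_le_of_abs_le_mul_min_norm_sq hK (by positivity) hF hψb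
  have hq0 : 0 ≤ (∑ i, ∑ j, |(q₁ - q₂) i j|) * K := by positivity
  have hhalf : |(1 / 2 : ℝ) * ((q₁ - q₂) * x.2.1).trace|
      = (1 / 2) * |((q₁ - q₂) * x.2.1).trace| := by
    rw [abs_mul, abs_of_pos (by norm_num : (0 : ℝ) < 1 / 2)]
  calc _ ≤ |∑ i, (p₁ - p₂) i * x.1 i| + |(1 / 2 : ℝ) * ((q₁ - q₂) * x.2.1).trace|
          + |∫ z, (ψ z - ψ 0 - fderiv ℝ ψ 0 (trunc z)) ∂x.2.2| := abs_add_three _ _ _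
    _ ≤ K * (‖p₁ - p₂‖ + (∑ i, ∑ j, |(q₁ - q₂) i j|) + C₁ + C₂) := by
        nlinarith

end Estimate

lemma HasUniformBound.exists_bounds {d : ℕ}
    {Θ : Set (Eu d × Matrix (Fin d) (Fin d) ℝ × Measure (Eu d))} (hΘ : HasUniformBound Θ) :
    ∃ K : ℝ, 0 ≤ K ∧ ∀ x ∈ Θ, ‖x.1‖ ≤ K ∧ (∀ i j, |x.2.1 i j| ≤ K) ∧
      ∫⁻ z, ENNReal.ofReal (min ‖z‖ (‖z‖ ^ 2)) ∂x.2.2 ≤ ENNReal.ofReal K := by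
  obtain ⟨K, hK⟩ := hΘ
  refine ⟨K, K.coe_nonneg, fun x hx => ?_⟩
  have h := hK x hx
  rw [← ENNReal.ofReal_coe_nnreal] at h
  have hentry : ∀ i j, ENNReal.ofReal |x.2.1 i j| ≤ ∑ i, ∑ j, ENNReal.ofReal |x.2.1 i j| :=
    fun i j => (Finset.single_le_sum (fun j _ => zero_le) (Finset.mem_univ j)).trans
      (Finset.single_le_sum (f := fun i => ∑ j, ENNReal.ofReal |x.2.1 i j|)
        (fun i _ => zero_le) (Finset.mem_univ i))
  refine ⟨?_, fun i j => ?_, le_self_add.trans (le_self_add.trans h)⟩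
  · exact (ENNReal.ofReal_le_ofReal_iff K.coe_nonneg).1 (le_add_self.trans (le_self_add.trans h))
  · exact (ENNReal.ofReal_le_ofReal_iff K.coe_nonneg).1 ((hentry i j).trans (le_add_self.trans h))

theorem Gk_condition_C8_general {d : ℕ}
    (Θ : Set (Eu d × Matrix (Fin d) (Fin d) ℝ × Measure (Eu d)))
    (hK : HasUniformBound Θ) :
    ∃ C > 0, ∀ κ ∈ Set.Ioo (0 : ℝ) 1, ∀ t ∈ Set.Ioi (0 : ℝ),
      ∀ (p₁ p₂ : Eu d) (q₁ q₂ : Matrix (Fin d) (Fin d) ℝ),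
        q₁.IsSymm → q₂.IsSymm →
      ∀ f : ℝ → Eu d → ℝ, IsBoundedSC f →
      ∀ g : ℝ → Eu d → ℝ, IsC12 g →
      ∀ ψ : Eu d → ℝ, IsC2b ψ →
      ∀ C₁ C₂ : ℝ, (∀ y, ‖fderiv ℝ ψ y‖ ≤ C₁) → (∀ y, ‖fderiv ℝ (fderiv ℝ ψ) y‖ ≤ C₂) →
        |Gkop Θ κ p₁ q₁ (fun z => f t z + ψ z) (fun z => g t z + ψ z)
            - Gkop Θ κ p₂ q₂ (f t) (g t)|
          ≤ C * (‖p₁ - p₂‖ + (∑ i, ∑ j, |(q₁ - q₂) i j|) + C₁ + C₂) := by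
  obtain ⟨K, hK0, hbounds⟩ := hK.exists_bounds
  refine ⟨K + 1, by positivity, ?_⟩
  intro κ hκ t ht p₁ p₂ q₁ q₂ _ _ f hf g hg ψ hψ C₁ C₂ h₁ h₂
  obtain ⟨Cf, hCf⟩ := hf.2
  have hX : 0 ≤ ‖p₁ - p₂‖ + (∑ i, ∑ j, |(q₁ - q₂) i j|) + C₁ + C₂ := by
    have := (norm_nonneg _).trans (h₁ 0)
    have := (norm_nonneg (fderiv ℝ (fderiv ℝ ψ) 0)).trans (h₂ 0)
    positivity
  rw [Gkop_eq_sSup_image, Gkop_eq_sSup_image]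
  refine abs_sSup_image_sub_sSup_image_le (by positivity) fun x hx => ?_
  obtain ⟨hb, hc, hF⟩ := hbounds x hx
  calc _ ≤ K * (‖p₁ - p₂‖ + (∑ i, ∑ j, |(q₁ - q₂) i j|) + C₁ + C₂) :=
        abs_gkObjective_add_sub_gkObjective_le hκ hK0 hb hc hF (hf.measurable_slice ht)
          (hCf t ht) (hg.2.2.1 t ht) hψ.1 h₁ h₂ p₁ p₂ q₁ q₂
    _ ≤ (K + 1) * (‖p₁ - p₂‖ + (∑ i, ∑ j, |(q₁ - q₂) i j|) + C₁ + C₂) := by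
        gcongr
        linarith

/-- **Statement 13** (Condition (C8) for `G^κ`): a uniform Lipschitz-type estimate for the
approximating nonlinearities `G^κ`, with a constant depending only on `𝒦`. -/
theorem Gk_condition_C8 {d : ℕ}
    (Θ : Set (Eu d × Matrix (Fin d) (Fin d) ℝ × Measure (Eu d)))
    (hne : Θ.Nonempty) (hmeas : MeasurableSet Θ) (htrip : IsLevyTripletSet Θ)
    (hK : HasUniformBound Θ) :
    ∃ C > 0, ∀ κ ∈ Set.Ioo (0 : ℝ) 1, ∀ t ∈ Set.Ioi (0 : ℝ),
      ∀ (p₁ p₂ : Eu d) (q₁ q₂ : Matrix (Fin d) (Fin d) ℝ),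
        q₁.IsSymm → q₂.IsSymm →
      ∀ f : ℝ → Eu d → ℝ, IsBoundedSC f →
      ∀ g : ℝ → Eu d → ℝ, IsC12 g →
      ∀ ψ : Eu d → ℝ, IsC2b ψ →
      ∀ C₁ C₂ : ℝ, (∀ y, ‖fderiv ℝ ψ y‖ ≤ C₁) → (∀ y, ‖fderiv ℝ (fderiv ℝ ψ) y‖ ≤ C₂) →
        |Gkop Θ κ p₁ q₁ (fun z => f t z + ψ z) (fun z => g t z + ψ z)
            - Gkop Θ κ p₂ q₂ (f t) (g t)|
          ≤ C * (‖p₁ - p₂‖ + (∑ i, ∑ j, |(q₁ - q₂) i j|) + C₁ + C₂) :=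
  Gk_condition_C8_general Θ hK
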